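/- Let {f_{α,γ}}_{α,γ∈ℤ} ⊆ ℂ[λ,∂] satisfy the structure coefficient equation, and suppose f_{α₀,γ₀} = 0 for some α₀ ≠ 0 and suppose additionally that for every γ ∈ ℤ, f_{α,γ} has the form F_{α,γ}((α+γ+C)λ+α∂) for one-variable polynomials F_{α,γ} and constant C. Then f_{α,γ₀} = 0 for all α ∈ ℤ. -/

import Mathlib

/-! With `β = α - α₀`, the structure equation at `(α₀, β, γ₀)` loses its last term, leaving
`(βλ - α₀μ) f_{α,γ₀}(λ+μ,∂) = f_{β,γ₀}(μ,∂+λ) f_{α₀,β+γ₀}(λ,∂)`. At `λ = μ = 0` the left side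
vanishes, so `f_{β,γ₀}(0,∂) f_{α₀,β+γ₀}(0,∂) = 0`. By the shape hypothesis
`f_{α,γ}(0,∂) = F_{α,γ}(α∂)`, which determines `F_{α,γ}` as soon as `α ≠ 0`; since `β ≠ 0` and
`α₀ ≠ 0`, one of the two factors on the right is identically zero, and then so is `f_{α,γ₀}`. -/

open MvPolynomial

/-- Substitute the two variables of `f ∈ ℂ[λ,∂]` by elements of `ℂ[λ,μ,∂]`. -/
noncomputable def sub2 (f : MvPolynomial (Fin 2) ℂ) (a b : MvPolynomial (Fin 3) ℂ) :
    MvPolynomial (Fin 3) ℂ :=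
  aeval ![a, b] f

/-- The structure coefficient equation of a free intermediate series module over the
Block-type Lie conformal algebra `B`, as an identity in `ℂ[λ,μ,∂]`
(`λ = X 0`, `μ = X 1`, `∂ = X 2`):
`(βλ - αμ) f_{α+β,γ}(λ+μ,∂)
   = f_{β,γ}(μ,∂+λ) f_{α,β+γ}(λ,∂) - f_{α,γ}(λ,∂+μ) f_{β,α+γ}(μ,∂)`. -/
def StructEq (f : ℤ → ℤ → MvPolynomial (Fin 2) ℂ) : Prop :=
  ∀ α β γ : ℤ,
    (C (β : ℂ) * X 0 - C (α : ℂ) * X 1) * sub2 (f (α + β) γ) (X 0 + X 1) (X 2)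
      = sub2 (f β γ) (X 1) (X 2 + X 0) * sub2 (f α (β + γ)) (X 0) (X 2)
        - sub2 (f α γ) (X 0) (X 2 + X 1) * sub2 (f β (α + γ)) (X 1) (X 2)

section

variable {R : Type*} [CommRing R]

lemma linear_form_ne_zero {a b : R} (hb : b ≠ 0) :
    (C a * X 0 - C b * X 1 : MvPolynomial (Fin 3) R) ≠ 0 := fun h => by
  simpa [hb] using congrArg (eval ![0, 1, 0]) h

/-- `g(λ, ∂) ↦ g(0, ∂)`. -/
noncomputable def restrictZero : MvPolynomial (Fin 2) R →ₐ[R] Polynomial R :=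
  aeval ![0, Polynomial.X]

lemma restrictZero_aeval_linear (F : Polynomial R) (a b : R) :
    restrictZero (Polynomial.aeval (C a * X 0 + C b * X 1 : MvPolynomial (Fin 2) R) F)
      = F.comp (Polynomial.C b * Polynomial.X) := by
  rw [← Polynomial.aeval_algHom_apply, Polynomial.comp_eq_aeval]
  simp [restrictZero]

lemma aeval_linear_eq_zero_of_restrictZero [IsDomain R] {F : Polynomial R} {a b : R}
    (hb : b ≠ 0)
    (h : restrictZero (Polynomial.aeval (C a * X 0 + C b * X 1 : MvPolynomial (Fin 2) R) F) = 0) :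
    Polynomial.aeval (C a * X 0 + C b * X 1 : MvPolynomial (Fin 2) R) F = 0 := by
  rw [restrictZero_aeval_linear, Polynomial.comp_C_mul_X_eq_zero_iff
    (mem_nonZeroDivisors_of_ne_zero hb)] at h
  rw [h, map_zero]

end

lemma aeval_sub2 {A : Type*} [CommSemiring A] [Algebra ℂ A] (v : Fin 3 → A)
    (g : MvPolynomial (Fin 2) ℂ) (a b : MvPolynomial (Fin 3) ℂ) :
    aeval v (sub2 g a b) = aeval ![aeval v a, aeval v b] g := by
  rw [sub2, comp_aeval_apply]
  congr 2
  funext i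
  fin_cases i <;> rfl

@[simp] lemma sub2_zero (a b : MvPolynomial (Fin 3) ℂ) : sub2 0 a b = 0 := map_zero _

lemma eq_zero_of_sub2_add_eq_zero {g : MvPolynomial (Fin 2) ℂ}
    (h : sub2 g (X 0 + X 1) (X 2) = 0) : g = 0 := by
  -- `(λ, μ, ∂) ↦ (λ, 0, ∂)` undoes the substitution `λ ↦ λ + μ`.
  have hinv := congrArg (aeval ![(X 0 : MvPolynomial (Fin 2) ℂ), 0, X 1]) h
  rw [map_zero, aeval_sub2] at hinv
  have hX : ![X 0, X 1] = (X : Fin 2 → MvPolynomial (Fin 2) ℂ) := by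
    funext i; fin_cases i <;> rfl
  simpa [hX] using hinv

namespace StructEq

variable {f : ℤ → ℤ → MvPolynomial (Fin 2) ℂ}

lemma mul_sub2_eq_of_eq_zero (hf : StructEq f) {α γ : ℤ} (h0 : f α γ = 0) (β : ℤ) :
    (C (β : ℂ) * X 0 - C (α : ℂ) * X 1) * sub2 (f (α + β) γ) (X 0 + X 1) (X 2)
      = sub2 (f β γ) (X 1) (X 2 + X 0) * sub2 (f α (β + γ)) (X 0) (X 2) := by
  rw [hf α β γ, h0, sub2_zero, zero_mul, sub_zero]

lemma restrictZero_mul_eq_zero (hf : StructEq f) {α γ : ℤ} (h0 : f α γ = 0) (β : ℤ) :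
    restrictZero (f β γ) * restrictZero (f α (β + γ)) = 0 := by
  have h := congrArg (aeval ![0, 0, (Polynomial.X : Polynomial ℂ)])
    (hf.mul_sub2_eq_of_eq_zero h0 β)
  simpa [aeval_sub2, restrictZero] using h.symm

end StructEq

/-- If the structure coefficients satisfy the structure coefficient equation, each has
the form `f_{α,γ}(λ,∂) = F_{α,γ}((α+γ+C)λ + α∂)`, and `f_{α₀,γ₀} = 0` for some
`α₀ ≠ 0`, then `f_{α,γ₀} = 0` for all `α ∈ ℤ`. -/
theorem vanishing_row (f : ℤ → ℤ → MvPolynomial (Fin 2) ℂ) (hf : StructEq f)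
    (Cc : ℂ) (F : ℤ → ℤ → Polynomial ℂ)
    (hform : ∀ α γ : ℤ, f α γ =
      Polynomial.aeval
        (C ((α : ℂ) + (γ : ℂ) + Cc) * X 0 + C (α : ℂ) * X 1 : MvPolynomial (Fin 2) ℂ)
        (F α γ))
    (α₀ γ₀ : ℤ) (hα₀ : α₀ ≠ 0) (h0 : f α₀ γ₀ = 0) :
    ∀ α : ℤ, f α γ₀ = 0 := by
  have eq_zero_of_restrictZero {α γ : ℤ} (hα : α ≠ 0) (h : restrictZero (f α γ) = 0) :
      f α γ = 0 := by
    rw [hform] at h ⊢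
    exact aeval_linear_eq_zero_of_restrictZero (Int.cast_ne_zero.2 hα) h
  intro α
  obtain rfl | hne := eq_or_ne α α₀
  · exact h0
  have hE := hf.mul_sub2_eq_of_eq_zero h0 (α - α₀)
  have hRHS : sub2 (f (α - α₀) γ₀) (X 1) (X 2 + X 0)
      * sub2 (f α₀ (α - α₀ + γ₀)) (X 0) (X 2) = 0 := by
    rcases mul_eq_zero.1 (hf.restrictZero_mul_eq_zero h0 (α - α₀)) with h | h
    · rw [eq_zero_of_restrictZero (sub_ne_zero.2 hne) h, sub2_zero, zero_mul]
    · rw [eq_zero_of_restrictZero hα₀ h, sub2_zero, mul_zero]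
  rw [hRHS, add_sub_cancel] at hE
  exact eq_zero_of_sub2_add_eq_zero
    ((mul_eq_zero.1 hE).resolve_left (linear_form_ne_zero (Int.cast_ne_zero.2 hα₀)))
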